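/- Let X be an infinite set and let S be a submonoid of the monoid of all functions X → X under composition. Suppose that for every a ∈ X there exist n ∈ ℕ and α, β, γ_1, …, γ_n ∈ S such that: (i) α and β agree on X \ {a} and α(a) ≠ β(a); (ii) a ∈ range(γ_i) for all i ∈ {1,…,n}; (iii) for every s ∈ S and every x ∈ X with x ≠ s(a), there is i ∈ {1,…,n} with range(γ_i) ∩ s⁻¹({x}) = ∅. Then the Zariski topology on S coincides with the topology of pointwise convergence on S. -/

import Mathlib

/-- Evaluation of the word `p_k · s · p_{k-1} · s ⋯ s · p_0` at `s`,
where the word is given by its lowest coefficient `p₀` and the list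
`ps = [p₁, …, p_k]` of the remaining coefficients. -/
def wordEval {S : Type*} [Monoid S] (s : S) (p₀ : S) (ps : List S) : S :=
  ps.foldl (fun acc q => q * s * acc) p₀

/-- The Zariski topology on a monoid `S`: generated by the sets
`M_{φ,ψ} = {s | φ(s) ≠ ψ(s)}` for all pairs of words `φ, ψ` with coefficients in `S`. -/
def zariskiTopology (S : Type*) [Monoid S] : TopologicalSpace S :=
  TopologicalSpace.generateFrom
    { M : Set S | ∃ (p₀ : S) (ps : List S) (q₀ : S) (qs : List S),
        M = { s : S | wordEval s p₀ ps ≠ wordEval s q₀ qs } }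

/-- The topology of pointwise convergence on functions `X → X`:
the product topology where every factor `X` is discrete. -/
def pwTop (X : Type*) : TopologicalSpace (X → X) :=
  @Pi.topologicalSpace X (fun _ => X) (fun _ => ⊥)

/-!
Composition is jointly continuous for the topology of pointwise convergence, which is
Hausdorff, so every word map `s ↦ φ(s)` is continuous and every `M_{φ,ψ}` is open: the Zariski
topology is coarser. Conversely, let `α, β` separate `b` and let `γ₁, …, γₙ` be the maps attached
to `a`. By (ii) and (iii), `s(a) = b` iff `b` lies in the range of every `s ∘ γᵢ`, and since
`α, β` differ exactly at `b` this says `α s γᵢ ≠ β s γᵢ` for all `i`. So the subbasic set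
`{s | s(a) = b}` is a finite intersection of Zariski generators.
-/

open Set Topology

section Zariski

variable {S : Type*} [Monoid S]

theorem wordEval_singleton (s p₀ q : S) : wordEval s p₀ [q] = q * s * p₀ := rfl

theorem wordEval_append_singleton (s p₀ q : S) (ps : List S) :
    wordEval s p₀ (ps ++ [q]) = q * s * wordEval s p₀ ps := by
  simp only [wordEval, List.foldl_append, List.foldl_cons, List.foldl_nil]

variable [TopologicalSpace S] [ContinuousMul S]

theorem continuous_wordEval (p₀ : S) (ps : List S) : Continuous fun s : S => wordEval s p₀ ps := by
  induction ps using List.reverseRecOn with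
  | nil => exact continuous_const
  | append_singleton ps q ih =>
    simp only [wordEval_append_singleton]
    exact (continuous_const.mul continuous_id).mul ih

theorem le_zariskiTopology [T2Space S] : ‹TopologicalSpace S› ≤ zariskiTopology S := by
  refine le_generateFrom ?_
  rintro M ⟨p₀, ps, q₀, qs, rfl⟩
  exact (isClosed_eq (continuous_wordEval p₀ ps) (continuous_wordEval q₀ qs)).isOpen_compl

end Zariski

section Pointwise

variable {X : Type*}

theorem t2Space_pwTop : @T2Space (X → X) (pwTop X) := by
  let _ : TopologicalSpace X := ⊥
  have _ : DiscreteTopology X := ⟨rfl⟩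
  exact Pi.t2Space

theorem continuousMul_pwTop : @ContinuousMul (Function.End X) (pwTop X) _ := by
  let _ : TopologicalSpace X := ⊥
  have _ : DiscreteTopology X := ⟨rfl⟩
  have continuous_eval : Continuous fun p : (X → X) × X => p.1 p.2 :=
    continuous_prod_of_discrete_right.mpr fun x => continuous_apply x
  let _ : TopologicalSpace (Function.End X) := pwTop X
  refine ⟨continuous_pi fun x => ?_⟩
  exact continuous_eval.comp (continuous_fst.prodMk ((continuous_apply x).comp continuous_snd))

theorem induced_pwTop_le_zariskiTopology (S : Submonoid (Function.End X)) :
    TopologicalSpace.induced (fun s : S => (s.1 : X → X)) (pwTop X) ≤ zariskiTopology S := by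
  let _ : TopologicalSpace (Function.End X) := pwTop X
  have _ : ContinuousMul (Function.End X) := continuousMul_pwTop
  have _ : T2Space (Function.End X) := t2Space_pwTop
  exact le_zariskiTopology (S := S)

theorem le_induced_pwTop_of_isOpen {T : Type*} (t : TopologicalSpace T) (f : T → X → X)
    (h : ∀ a b, IsOpen[t] {s | f s a = b}) : t ≤ TopologicalSpace.induced f (pwTop X) := by
  let _ : TopologicalSpace X := ⊥
  have _ : DiscreteTopology X := ⟨rfl⟩
  exact continuous_iff_le_induced.mp
    (continuous_pi fun a => continuous_discrete_rng.mpr fun b => h a b)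

end Pointwise

theorem comp_ne_comp_iff_mem_range {X Y Z : Type*} {α β : Y → Z} {b : Y}
    (hagree : ∀ y, y ≠ b → α y = β y) (hb : α b ≠ β b) (f : X → Y) :
    α ∘ f ≠ β ∘ f ↔ b ∈ range f := by
  constructor
  · intro hne
    obtain ⟨x, hx⟩ := Function.ne_iff.mp hne
    exact ⟨x, by_contra fun hxb => hx (hagree _ hxb)⟩
  · rintro ⟨x, rfl⟩ heq
    exact hb (congrFun heq x)

theorem apply_eq_iff_forall_mem_range_comp {X Y Z ι : Type*} {γ : ι → Y → X} {s : X → Z}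
    {a : X} (hγ : ∀ i, a ∈ range (γ i)) (hs : ∀ z, z ≠ s a → ∃ i, range (γ i) ∩ s ⁻¹' {z} = ∅)
    (b : Z) : s a = b ↔ ∀ i, b ∈ range (s ∘ γ i) := by
  constructor
  · rintro rfl i
    obtain ⟨y, hy⟩ := hγ i
    exact ⟨y, by rw [Function.comp_apply, hy]⟩
  · intro h
    by_contra hne
    obtain ⟨i, hi⟩ := hs b (Ne.symm hne)
    obtain ⟨y, hy⟩ := h i
    exact eq_empty_iff_forall_notMem.mp hi (γ i y) ⟨mem_range_self y, hy⟩

theorem isOpen_zariskiTopology_setOf_apply_eq {X ι : Type*} [Finite ι]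
    {S : Submonoid (Function.End X)} {a b : X} (γ : ι → S)
    (hγ : ∀ i, a ∈ range ((γ i).1 : X → X))
    (hs : ∀ (s : S) (x : X), x ≠ (s.1 : X → X) a →
      ∃ i, range ((γ i).1 : X → X) ∩ (s.1 : X → X) ⁻¹' {x} = ∅)
    (α β : S) (hagree : ∀ x, x ≠ b → (α.1 : X → X) x = (β.1 : X → X) x)
    (hb : (α.1 : X → X) b ≠ (β.1 : X → X) b) :
    IsOpen[zariskiTopology S] {s : S | (s.1 : X → X) a = b} := by
  have h : {s : S | (s.1 : X → X) a = b} =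
      ⋂ i, {s : S | wordEval s (γ i) [α] ≠ wordEval s (γ i) [β]} := by
    ext s
    simp only [mem_ofPred_eq, mem_iInter, wordEval_singleton, Ne, Subtype.ext_iff,
      apply_eq_iff_forall_mem_range_comp hγ (hs s)]
    exact forall_congr' fun i => (comp_ne_comp_iff_mem_range hagree hb _).symm
  let _ : TopologicalSpace S := zariskiTopology S
  rw [h]
  exact isOpen_iInter_of_finite fun i =>
    TopologicalSpace.isOpen_generateFrom_of_mem ⟨γ i, [α], γ i, [β], rfl⟩

theorem stmt11_general {X : Type*} (S : Submonoid (Function.End X))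
    (H : ∀ a : X, ∃ (n : ℕ) (α β : ↥S) (γ : Fin n → ↥S),
      (∀ x : X, x ≠ a → (α.1 : X → X) x = (β.1 : X → X) x) ∧
      (α.1 : X → X) a ≠ (β.1 : X → X) a ∧
      (∀ i, a ∈ Set.range ((γ i).1 : X → X)) ∧
      (∀ (s : ↥S) (x : X), x ≠ (s.1 : X → X) a →
        ∃ i, Set.range ((γ i).1 : X → X) ∩ (s.1 : X → X) ⁻¹' {x} = ∅)) :
    zariskiTopology ↥S =
      TopologicalSpace.induced (fun s : ↥S => (s.1 : X → X)) (pwTop X) := by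
  refine le_antisymm (le_induced_pwTop_of_isOpen _ _ fun a b => ?_)
    (induced_pwTop_le_zariskiTopology S)
  obtain ⟨_, -, -, γ, -, -, hγ, hs⟩ := H a
  obtain ⟨_, α, β, -, hagree, hb, -, -⟩ := H b
  exact isOpen_zariskiTopology_setOf_apply_eq γ hγ hs α β hagree hb

/-- The technical criterion: if for every `a ∈ X` there are `α, β, γ₁, …, γₙ` in `S` with
(i) `α, β` agree off `a` but differ at `a`, (ii) `a` is in the range of each `γᵢ`, and
(iii) for every `s ∈ S` and `x ≠ s(a)` some `γᵢ` has range disjoint from `s⁻¹(x)`,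
then the Zariski topology on `S` coincides with the topology of pointwise convergence. -/
theorem stmt11 {X : Type*} [Infinite X] (S : Submonoid (Function.End X))
    (H : ∀ a : X, ∃ (n : ℕ) (α β : ↥S) (γ : Fin n → ↥S),
      (∀ x : X, x ≠ a → (α.1 : X → X) x = (β.1 : X → X) x) ∧
      (α.1 : X → X) a ≠ (β.1 : X → X) a ∧
      (∀ i, a ∈ Set.range ((γ i).1 : X → X)) ∧
      (∀ (s : ↥S) (x : X), x ≠ (s.1 : X → X) a →
        ∃ i, Set.range ((γ i).1 : X → X) ∩ (s.1 : X → X) ⁻¹' {x} = ∅)) :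
    zariskiTopology ↥S =
      TopologicalSpace.induced (fun s : ↥S => (s.1 : X → X)) (pwTop X) :=
  stmt11_general S H
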